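/- arXiv:2401.13559 — 2 statements merged into one kernel-verified Lean document; each statement's English description precedes it below -/
import Mathlib

section
/- Let α₁ < α₂ < α₃ be real numbers, let N ∈ ℕ ∪ {∞}, and let (a_n)_{n=1}^N be a sequence with a_n > α₁ for all n and with (1/i)(a₁ + a₂ + ⋯ + a_i) ≤ α₂ for every integer 1 ≤ i ≤ N. Let {k_i} be the increasing enumeration of the direction-preserving Pliss moments and {m_i} the increasing enumeration of the direction-reversing Pliss moments of the sequence. Then whenever the i-th direction-preserving Pliss moment k_i exists one has i/k_i ≥ (α₂ − α₃)/(α₁ − α₃), and whenever the i-th direction-reversing Pliss moment m_i exists one has i/m_i ≥ (α₂ − α₃)/(α₁ − α₃); in particular, if N = ∞ then there are infinitely many Pliss moments of each kind. -/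
/-!
Put `F n = ∑_{j=1}^n (a_j - α₃)`, so `F 0 = 0`. Then `t + 1` is a direction-preserving Pliss
moment iff `F t ≥ F u` for all later `u ≤ N`, and `t + 1` is a direction-reversing one iff
`F t ≤ F u` for all `u ≤ t`. The averaging hypothesis says `F n ≤ -(α₃ - α₂) n`, and `a_n > α₁`
says `F` drops by less than `α₃ - α₁` per step. So between `F 0 = 0` and `F T` (where `T + 1` is a
moment of either kind) the walk must pass through at least `1 + (α₃ - α₂) T / (α₃ - α₁)` records
of the corresponding kind, which is the density bound. When `N = ∞`, `F → -∞`, so records occur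
arbitrarily far out.
-/

/-- `k` is a direction-preserving Pliss moment of the sequence `a` (indexed from `1`),
with horizon `N ∈ ℕ ∪ {∞}` and threshold `α₃`:
`(1/(i+1)) (a_k + ⋯ + a_(k+i)) ≤ α₃` for all integers `0 ≤ i ≤ N - k`. -/
def DirPresPliss (N : ℕ∞) (a : ℕ → ℝ) (α₃ : ℝ) (k : ℕ) : Prop :=
  1 ≤ k ∧ (k : ℕ∞) ≤ N ∧
    ∀ i : ℕ, ((k + i : ℕ) : ℕ∞) ≤ N →
      ∑ j ∈ Finset.Icc k (k + i), a j ≤ α₃ * ((i : ℝ) + 1)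

/-- `m` is a direction-reversing Pliss moment of the sequence `a` (indexed from `1`),
with horizon `N ∈ ℕ ∪ {∞}` and threshold `α₃`: either `m = 1`, or `m > 1` and
`(1/i) (a_(m-i) + ⋯ + a_(m-1)) ≤ α₃` for all integers `1 ≤ i < m`. -/
def DirRevPliss (N : ℕ∞) (a : ℕ → ℝ) (α₃ : ℝ) (m : ℕ) : Prop :=
  1 ≤ m ∧ (m : ℕ∞) ≤ N ∧
    (m = 1 ∨ ∀ i : ℕ, 1 ≤ i → i < m →
      ∑ j ∈ Finset.Icc (m - i) (m - 1), a j ≤ α₃ * (i : ℝ))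

open Finset Filter

section Records

variable {f : ℕ → ℝ} {β : ℝ}

noncomputable def forwardRecords (f : ℕ → ℝ) (s T : ℕ) : Finset ℕ :=
  (Icc s T).filter fun t => ∀ u ∈ Icc t T, f u ≤ f t

noncomputable def backwardRecords (f : ℕ → ℝ) (T : ℕ) : Finset ℕ :=
  (Iic T).filter fun t => ∀ u ∈ Iic t, f t ≤ f u

theorem add_le_add_card_forwardRecords_mul (hβ : 0 ≤ β) {T : ℕ}
    (hstep : ∀ n < T, f n - β ≤ f (n + 1)) {s : ℕ} (hs : s ≤ T) :
    f s + β ≤ f T + #(forwardRecords f s T) * β := by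
  induction h : T - s using Nat.strong_induction_on generalizing s with
  | _ d ih =>
  obtain ⟨w, hw, hwmax⟩ := (Icc s T).exists_max_image f ⟨s, mem_Icc.2 ⟨le_rfl, hs⟩⟩
  obtain ⟨hsw, hwT⟩ := mem_Icc.1 hw
  have hwrec : w ∈ forwardRecords f s T :=
    mem_filter.2 ⟨hw, fun u hu => hwmax u (Icc_subset_Icc_left hsw hu)⟩
  have hfs_le := hwmax s (mem_Icc.2 ⟨le_rfl, hs⟩)
  rcases hwT.eq_or_lt with rfl | hwT
  · have hcard : (1 : ℝ) ≤ #(forwardRecords f s w) := by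
      exact_mod_cast card_pos.2 ⟨w, hwrec⟩
    nlinarith
  · have hnext := ih (T - (w + 1)) (by omega) hwT rfl
    have hsub : forwardRecords f (w + 1) T ⊂ forwardRecords f s T :=
      (ssubset_iff_of_subset (filter_subset_filter _ (Icc_subset_Icc_left (by omega)))).2
        ⟨w, hwrec, fun h => by have := (mem_Icc.1 (mem_filter.1 h).1).1; omega⟩
    have hcard : ((#(forwardRecords f (w + 1) T) : ℝ) + 1) * β ≤ #(forwardRecords f s T) * β :=
      mul_le_mul_of_nonneg_right (by exact_mod_cast card_lt_card hsub) hβ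
    have := hstep w hwT
    linarith

theorem add_le_add_card_backwardRecords_mul (hβ : 0 ≤ β) {T : ℕ}
    (hstep : ∀ n < T, f n - β ≤ f (n + 1)) :
    f 0 + β ≤ f T + #(backwardRecords f T) * β := by
  induction T using Nat.strong_induction_on with
  | _ T ih =>
  obtain ⟨w, hw, hwmin⟩ := (Iic T).exists_min_image f ⟨T, mem_Iic.2 le_rfl⟩
  have hwrec : w ∈ backwardRecords f T :=
    mem_filter.2 ⟨hw, fun u hu => hwmin u (Iic_subset_Iic.2 (mem_Iic.1 hw) hu)⟩
  have hwT := hwmin T (mem_Iic.2 le_rfl)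
  rcases w with _ | v
  · have hcard : (1 : ℝ) ≤ #(backwardRecords f T) := by
      exact_mod_cast card_pos.2 ⟨0, hwrec⟩
    nlinarith
  · have hvT : v < T := mem_Iic.1 hw
    have hprev := ih v hvT fun n hn => hstep n (hn.trans hvT)
    have hsub : backwardRecords f v ⊂ backwardRecords f T :=
      (ssubset_iff_of_subset (filter_subset_filter _ (Iic_subset_Iic.2 hvT.le))).2
        ⟨v + 1, hwrec, fun h => by have := mem_Iic.1 (mem_filter.1 h).1; omega⟩
    have hcard : ((#(backwardRecords f v) : ℝ) + 1) * β ≤ #(backwardRecords f T) * β :=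
      mul_le_mul_of_nonneg_right (by exact_mod_cast card_lt_card hsub) hβ
    have := hstep v hvT
    linarith

end Records

section Unbounded

variable {α : Type*} [LinearOrder α] {f : ℕ → α}

theorem exists_gt_forall_ge_le (hf : Tendsto f atTop atBot) (n : ℕ) :
    ∃ w > n, ∀ u ≥ w, f u ≤ f w := by
  rw [← Nat.cofinite_eq_atTop] at hf
  obtain ⟨w, hw, hmax⟩ := hf.exists_within_forall_ge (Set.nonempty_Ioi (a := n))
  exact ⟨w, hw, fun u hu => hmax u (lt_of_lt_of_le hw hu)⟩

theorem exists_gt_forall_le_ge [NoBotOrder α] (hf : Tendsto f atTop atBot) (n : ℕ) :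
    ∃ w > n, ∀ u ≤ w, f w ≤ f u := by
  obtain ⟨c, -, hc⟩ := (Iic n).exists_min_image f ⟨n, mem_Iic.2 le_rfl⟩
  obtain ⟨M, hM⟩ := (hf.eventually_lt_atBot (f c)).exists
  obtain ⟨w, hw, hwmin⟩ := (Iic M).exists_min_image f ⟨M, mem_Iic.2 le_rfl⟩
  refine ⟨w, ?_, fun u hu => hwmin u (mem_Iic.2 (hu.trans (mem_Iic.1 hw)))⟩
  by_contra! hwn
  have := hc w (mem_Iic.2 hwn)
  have := hwmin M (mem_Iic.2 le_rfl)
  exact lt_irrefl (f c) (by order)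

end Unbounded

noncomputable def shiftedPartialSum (a : ℕ → ℝ) (c : ℝ) (n : ℕ) : ℝ :=
  ∑ j ∈ Icc 1 n, (a j - c)

section PartialSum

variable {a : ℕ → ℝ} {c : ℝ}

@[simp] theorem shiftedPartialSum_zero : shiftedPartialSum a c 0 = 0 := by
  simp [shiftedPartialSum]

theorem sum_Icc_succ_eq_shiftedPartialSum {t u : ℕ} (htu : t ≤ u) :
    ∑ j ∈ Icc (t + 1) u, a j =
      shiftedPartialSum a c u - shiftedPartialSum a c t + c * (u - t) := by
  have hIcc_one (n : ℕ) : Icc 1 n = Ioc 0 n := Icc_add_one_left_eq_Ioc 0 n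
  have hshift : ∑ j ∈ Icc (t + 1) u, (a j - c) =
      shiftedPartialSum a c u - shiftedPartialSum a c t := by
    rw [shiftedPartialSum, shiftedPartialSum, hIcc_one, hIcc_one, Icc_add_one_left_eq_Ioc,
      ← sum_Ioc_consecutive _ (Nat.zero_le t) htu, add_sub_cancel_left]
  rw [sum_sub_distrib, sum_const, Nat.card_Icc, nsmul_eq_mul, Nat.add_sub_add_right,
    Nat.cast_sub htu] at hshift
  linarith

theorem shiftedPartialSum_sub_le_succ {α₁ : ℝ} {n : ℕ} (h : α₁ < a (n + 1)) :
    shiftedPartialSum a c n - (c - α₁) ≤ shiftedPartialSum a c (n + 1) := by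
  rw [shiftedPartialSum, shiftedPartialSum, sum_Icc_succ_top (by omega)]
  linarith

theorem shiftedPartialSum_le_of_sum_le {α₂ : ℝ} {n : ℕ}
    (h : ∑ j ∈ Icc 1 n, a j ≤ α₂ * n) : shiftedPartialSum a c n ≤ (α₂ - c) * n := by
  rw [shiftedPartialSum, sum_sub_distrib, sum_const, Nat.card_Icc, nsmul_eq_mul,
    Nat.add_sub_cancel]
  linarith

end PartialSum

section PlissMoments

variable {N : ℕ∞} {a : ℕ → ℝ} {α₁ α₂ α₃ : ℝ}

theorem dirPresPliss_succ_iff {t : ℕ} :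
    DirPresPliss N a α₃ (t + 1) ↔ ((t + 1 : ℕ) : ℕ∞) ≤ N ∧
      ∀ u > t, (u : ℕ∞) ≤ N → shiftedPartialSum a α₃ u ≤ shiftedPartialSum a α₃ t := by
  have hterm (i : ℕ) : ∑ j ∈ Icc (t + 1) (t + 1 + i), a j ≤ α₃ * ((i : ℝ) + 1) ↔
      shiftedPartialSum a α₃ (t + 1 + i) ≤ shiftedPartialSum a α₃ t := by
    rw [sum_Icc_succ_eq_shiftedPartialSum (c := α₃) (by omega)]
    push_cast
    constructor <;> intro h <;> linarith
  simp only [DirPresPliss, hterm, le_add_iff_nonneg_left, zero_le, true_and]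
  refine and_congr_right fun _ => ⟨fun h u hu => ?_, fun h i => h _ (by omega)⟩
  obtain ⟨i, rfl⟩ := Nat.exists_eq_add_of_lt hu
  simpa only [add_right_comm] using h i

theorem dirRevPliss_succ {t : ℕ} (htN : ((t + 1 : ℕ) : ℕ∞) ≤ N)
    (hmin : ∀ u ≤ t, shiftedPartialSum a α₃ t ≤ shiftedPartialSum a α₃ u) :
    DirRevPliss N a α₃ (t + 1) := by
  refine ⟨by omega, htN, Or.inr fun i _ hi => ?_⟩
  obtain ⟨v, rfl⟩ := Nat.exists_eq_add_of_le (Nat.le_of_lt_succ hi)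
  have := hmin v (Nat.le_add_left v i)
  rw [show i + v + 1 - i = v + 1 by omega, Nat.add_sub_cancel,
    sum_Icc_succ_eq_shiftedPartialSum (c := α₃) (Nat.le_add_left v i)]
  push_cast
  linarith

theorem div_le_div_succ_of_le_add_mul {T c r : ℕ} {x : ℝ} (h12 : α₁ < α₂) (h23 : α₂ < α₃)
    (hcr : c ≤ r) (hx : x ≤ (α₂ - α₃) * T) (h : α₃ - α₁ ≤ x + c * (α₃ - α₁)) :
    (α₂ - α₃) / (α₁ - α₃) ≤ (r : ℝ) / (T + 1 : ℕ) := by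
  have hcr' : (c : ℝ) * (α₃ - α₁) ≤ r * (α₃ - α₁) :=
    mul_le_mul_of_nonneg_right (Nat.cast_le.2 hcr) (by linarith)
  rw [← neg_div_neg_eq, neg_sub, neg_sub, div_le_div_iff₀ (by linarith) (by positivity)]
  push_cast
  nlinarith

theorem ncard_setOf_le_dirPresPliss_ge (h12 : α₁ < α₂) (h23 : α₂ < α₃)
    (hstep : ∀ n : ℕ, ((n + 1 : ℕ) : ℕ∞) ≤ N →
      shiftedPartialSum a α₃ n - (α₃ - α₁) ≤ shiftedPartialSum a α₃ (n + 1))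
    (hbound : ∀ n : ℕ, (n : ℕ∞) ≤ N → shiftedPartialSum a α₃ n ≤ (α₂ - α₃) * n)
    {k : ℕ} (hk : DirPresPliss N a α₃ k) :
    (α₂ - α₃) / (α₁ - α₃) ≤ ({j : ℕ | j ≤ k ∧ DirPresPliss N a α₃ j}.ncard : ℝ) / k := by
  obtain ⟨T, rfl⟩ : ∃ T, k = T + 1 := ⟨k - 1, by have := hk.1; omega⟩
  obtain ⟨hTN, hTmax⟩ := dirPresPliss_succ_iff.1 hk
  have hle_N {n : ℕ} (hn : n ≤ T + 1) : (n : ℕ∞) ≤ N := (Nat.cast_le.2 hn).trans hTN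
  have hcount := add_le_add_card_forwardRecords_mul (f := shiftedPartialSum a α₃)
    (by linarith : 0 ≤ α₃ - α₁) (fun n hn => hstep n (hle_N (by omega))) (Nat.zero_le T)
  have hcard : #(forwardRecords (shiftedPartialSum a α₃) 0 T) ≤
      {j : ℕ | j ≤ T + 1 ∧ DirPresPliss N a α₃ j}.ncard := by
    rw [← Set.ncard_coe_finset]
    refine Set.ncard_le_ncard_of_injOn (· + 1) (fun t ht => ?_) (add_left_injective 1).injOn
      ((Set.finite_Iic (T + 1)).subset fun j hj => hj.1)
    obtain ⟨htI, htmax⟩ := mem_filter.1 ht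
    have htT := (mem_Icc.1 htI).2
    refine ⟨by omega, dirPresPliss_succ_iff.2 ⟨hle_N (by omega), fun u hu huN => ?_⟩⟩
    rcases le_or_gt u T with huT | huT
    · exact htmax u (mem_Icc.2 ⟨hu.le, huT⟩)
    · exact (hTmax u huT huN).trans (htmax T (mem_Icc.2 ⟨htT, le_rfl⟩))
  rw [shiftedPartialSum_zero, zero_add] at hcount
  exact div_le_div_succ_of_le_add_mul h12 h23 hcard (hbound T (hle_N T.le_succ)) hcount

theorem ncard_setOf_le_dirRevPliss_ge (h12 : α₁ < α₂) (h23 : α₂ < α₃)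
    (hstep : ∀ n : ℕ, ((n + 1 : ℕ) : ℕ∞) ≤ N →
      shiftedPartialSum a α₃ n - (α₃ - α₁) ≤ shiftedPartialSum a α₃ (n + 1))
    (hbound : ∀ n : ℕ, (n : ℕ∞) ≤ N → shiftedPartialSum a α₃ n ≤ (α₂ - α₃) * n)
    {m : ℕ} (hm : DirRevPliss N a α₃ m) :
    (α₂ - α₃) / (α₁ - α₃) ≤ ({j : ℕ | j ≤ m ∧ DirRevPliss N a α₃ j}.ncard : ℝ) / m := by
  obtain ⟨T, rfl⟩ : ∃ T, m = T + 1 := ⟨m - 1, by have := hm.1; omega⟩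
  have hle_N {n : ℕ} (hn : n ≤ T + 1) : (n : ℕ∞) ≤ N := (Nat.cast_le.2 hn).trans hm.2.1
  have hcount := add_le_add_card_backwardRecords_mul (f := shiftedPartialSum a α₃) (T := T)
    (by linarith : 0 ≤ α₃ - α₁) (fun n hn => hstep n (hle_N (by omega)))
  have hcard : #(backwardRecords (shiftedPartialSum a α₃) T) ≤
      {j : ℕ | j ≤ T + 1 ∧ DirRevPliss N a α₃ j}.ncard := by
    rw [← Set.ncard_coe_finset]
    refine Set.ncard_le_ncard_of_injOn (· + 1) (fun t ht => ?_) (add_left_injective 1).injOn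
      ((Set.finite_Iic (T + 1)).subset fun j hj => hj.1)
    obtain ⟨htI, htmin⟩ := mem_filter.1 ht
    have htT := mem_Iic.1 htI
    exact ⟨by omega, dirRevPliss_succ (hle_N (by omega)) fun u hu => htmin u (mem_Iic.2 hu)⟩
  rw [shiftedPartialSum_zero, zero_add] at hcount
  exact div_le_div_succ_of_le_add_mul h12 h23 hcard (hbound T (hle_N T.le_succ)) hcount

theorem infinite_setOf_dirPresPliss
    (hF : Tendsto (shiftedPartialSum a α₃) atTop atBot) :
    {k : ℕ | DirPresPliss ⊤ a α₃ k}.Infinite := by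
  refine Set.infinite_of_forall_exists_gt fun n => ?_
  obtain ⟨w, hwn, hwmax⟩ := exists_gt_forall_ge_le hF n
  exact ⟨w + 1, dirPresPliss_succ_iff.2 ⟨le_top, fun u hu _ => hwmax u hu.le⟩, by omega⟩

theorem infinite_setOf_dirRevPliss
    (hF : Tendsto (shiftedPartialSum a α₃) atTop atBot) :
    {m : ℕ | DirRevPliss ⊤ a α₃ m}.Infinite := by
  refine Set.infinite_of_forall_exists_gt fun n => ?_
  obtain ⟨w, hwn, hwmin⟩ := exists_gt_forall_le_ge hF n
  exact ⟨w + 1, dirRevPliss_succ le_top hwmin, by omega⟩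

end PlissMoments

/-- **Pliss lemma.** If `α₁ < α₂ < α₃`, `a_n > α₁` for all `1 ≤ n ≤ N`, and all the averages
`(1/i)(a₁ + ⋯ + a_i)` for `1 ≤ i ≤ N` are at most `α₂`, then whenever the `i`-th
direction-preserving (resp. direction-reversing) Pliss moment `k_i` exists — equivalently,
whenever `k` is such a moment and `i` is the number of such moments in `[1, k]` — one has
`i / k_i ≥ (α₂ - α₃)/(α₁ - α₃)`; moreover if `N = ∞` there are infinitely many Pliss moments
of each kind. -/
theorem pliss_lemma_finite_horizon
    (α₁ α₂ α₃ : ℝ) (h12 : α₁ < α₂) (h23 : α₂ < α₃)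
    (N : ℕ∞) (a : ℕ → ℝ)
    (ha : ∀ n : ℕ, 1 ≤ n → (n : ℕ∞) ≤ N → α₁ < a n)
    (havg : ∀ i : ℕ, 1 ≤ i → (i : ℕ∞) ≤ N →
      ∑ n ∈ Finset.Icc 1 i, a n ≤ α₂ * (i : ℝ)) :
    (∀ k : ℕ, DirPresPliss N a α₃ k →
      (α₂ - α₃) / (α₁ - α₃) ≤
        ({j : ℕ | j ≤ k ∧ DirPresPliss N a α₃ j}.ncard : ℝ) / (k : ℝ)) ∧
    (∀ m : ℕ, DirRevPliss N a α₃ m →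
      (α₂ - α₃) / (α₁ - α₃) ≤
        ({j : ℕ | j ≤ m ∧ DirRevPliss N a α₃ j}.ncard : ℝ) / (m : ℝ)) ∧
    (N = ⊤ → {k : ℕ | DirPresPliss N a α₃ k}.Infinite ∧
      {m : ℕ | DirRevPliss N a α₃ m}.Infinite) := by
  have hstep (n : ℕ) (hn : ((n + 1 : ℕ) : ℕ∞) ≤ N) :
      shiftedPartialSum a α₃ n - (α₃ - α₁) ≤ shiftedPartialSum a α₃ (n + 1) :=
    shiftedPartialSum_sub_le_succ (ha (n + 1) (by omega) hn)
  have hbound (n : ℕ) (hn : (n : ℕ∞) ≤ N) :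
      shiftedPartialSum a α₃ n ≤ (α₂ - α₃) * n := by
    refine shiftedPartialSum_le_of_sum_le ?_
    rcases n.eq_zero_or_pos with rfl | hpos
    · simp
    · exact havg n hpos hn
  refine ⟨fun k hk => ncard_setOf_le_dirPresPliss_ge h12 h23 hstep hbound hk,
    fun m hm => ncard_setOf_le_dirRevPliss_ge h12 h23 hstep hbound hm, fun hN => ?_⟩
  subst hN
  have hF : Tendsto (shiftedPartialSum a α₃) atTop atBot :=
    tendsto_atBot_mono (fun n => hbound n le_top)
      (tendsto_natCast_atTop_atTop.const_mul_atTop_of_neg (by linarith))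
  exact ⟨infinite_setOf_dirPresPliss hF, infinite_setOf_dirRevPliss hF⟩
end

section
/- There exist constants C ≥ 1, D ≥ 1 and β ≥ 1, depending only on r, such that the following holds. Assume F is η-homogeneous on Λ with rate λ, with universal smallness relations C·η^β < ε < δ and C·δ^{1/β} < 1, and set δ′ := δ^β/C. Let p₀ ∈ Λ be Pesin (L,ε)_v-regular along a direction E (the same statement holds with _h in place of _v throughout), and let n be an integer with n > −δ^{−1}·log_λ(C·L^D). If p_n := F^n(p₀) is (n, ∞)-times (1, δ′)_v-regular along E_{p_n} := DF^n(E), then p_n is Pesin (1,δ)_v-regular along E_{p_n}. Similarly, if p_{−n} := F^{−n}(p₀) is (∞, n)-times (1, δ′)_v-regular along E_{p_{−n}} := DF^{−n}(E), then p_{−n} is Pesin (1,δ)_v-regular along E_{p_{−n}}. -/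
open Real Function Set Filter MeasureTheory

noncomputable section

/-- The Euclidean plane `ℝ²` with the Euclidean norm. -/
abbrev E2 := EuclideanSpace ℝ (Fin 2)

/-- The Jacobian determinant of `F` at `p`. -/
def jacAt (F : E2 → E2) (p : E2) : ℝ :=
  LinearMap.det (fderiv ℝ F p).toLinearMap

/-- The angle between the directions (lines) spanned by the unit vectors `u` and `v`. -/
def lineAngle (u v : E2) : ℝ :=
  Real.arccos |(@inner ℝ E2 _ u v)|

/-- The unit vector spanning the image under `T` of the direction spanned by `v`. -/
def pushDir (T : E2 →L[ℝ] E2) (v : E2) : E2 :=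
  ‖T v‖⁻¹ • T v

/-- The `m`-th iterate (`m : ℤ`), computed using `F` forwards and its inverse `G` backwards. -/
def iterZ (F G : E2 → E2) (m : ℤ) : E2 → E2 :=
  if 0 ≤ m then F^[m.toNat] else G^[(-m).toNat]

/-- `p` is `N`-times forward `(L, ε)_v`-regular along the direction of the unit vector `v`:
`L⁻¹ λ^((1+ε)n) ≤ (Jac_p Fⁿ)^s / ‖D_pFⁿ|_E‖^(s-1) ≤ L λ^((1-ε)n)` for `s ∈ {-r, r-1}`,
`1 ≤ n ≤ N`. -/
def FwdRegV (F : E2 → E2) (p : E2) (lam L ε : ℝ) (r : ℕ) (N : ℕ∞) (v : E2) : Prop :=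
  ∀ n : ℕ, 1 ≤ n → (n : ℕ∞) ≤ N → ∀ s : ℤ, s = -(r : ℤ) ∨ s = (r : ℤ) - 1 →
    L⁻¹ * lam ^ ((1 + ε) * (n : ℝ)) ≤
        jacAt (F^[n]) p ^ s / ‖fderiv ℝ (F^[n]) p v‖ ^ (s - 1) ∧
      jacAt (F^[n]) p ^ s / ‖fderiv ℝ (F^[n]) p v‖ ^ (s - 1) ≤
        L * lam ^ ((1 - ε) * (n : ℝ))

/-- `p` is `N`-times forward `(L, ε)_h`-regular along the direction of the unit vector `v`:
`L⁻¹ λ^((1+ε)n) ≤ Jac_p Fⁿ / ‖D_pFⁿ|_E‖^(s+1) ≤ L λ^((1-ε)n)` for `s ∈ {-r+1, r}`,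
`1 ≤ n ≤ N`. -/
def FwdRegH (F : E2 → E2) (p : E2) (lam L ε : ℝ) (r : ℕ) (N : ℕ∞) (v : E2) : Prop :=
  ∀ n : ℕ, 1 ≤ n → (n : ℕ∞) ≤ N → ∀ s : ℤ, s = -(r : ℤ) + 1 ∨ s = (r : ℤ) →
    L⁻¹ * lam ^ ((1 + ε) * (n : ℝ)) ≤
        jacAt (F^[n]) p / ‖fderiv ℝ (F^[n]) p v‖ ^ (s + 1) ∧
      jacAt (F^[n]) p / ‖fderiv ℝ (F^[n]) p v‖ ^ (s + 1) ≤
        L * lam ^ ((1 - ε) * (n : ℝ))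

/-- `p` is `M`-times backward `(L, ε)_v`-regular along the direction of the unit vector `v`;
the backward iterates `F^(-n)` are given by the iterates of the inverse map `G`. -/
def BwdRegV (G : E2 → E2) (p : E2) (lam L ε : ℝ) (r : ℕ) (M : ℕ∞) (v : E2) : Prop :=
  ∀ n : ℕ, 1 ≤ n → (n : ℕ∞) ≤ M → ∀ s : ℤ, s = -(r : ℤ) ∨ s = (r : ℤ) - 1 →
    L⁻¹ * lam ^ (-(1 - ε) * (n : ℝ)) ≤
        jacAt (G^[n]) p ^ s / ‖fderiv ℝ (G^[n]) p v‖ ^ (s - 1) ∧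
      jacAt (G^[n]) p ^ s / ‖fderiv ℝ (G^[n]) p v‖ ^ (s - 1) ≤
        L * lam ^ (-(1 + ε) * (n : ℝ))

/-- `p` is `M`-times backward `(L, ε)_h`-regular along the direction of the unit vector `v`. -/
def BwdRegH (G : E2 → E2) (p : E2) (lam L ε : ℝ) (r : ℕ) (M : ℕ∞) (v : E2) : Prop :=
  ∀ n : ℕ, 1 ≤ n → (n : ℕ∞) ≤ M → ∀ s : ℤ, s = -(r : ℤ) + 1 ∨ s = (r : ℤ) →
    L⁻¹ * lam ^ (-(1 - ε) * (n : ℝ)) ≤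
        jacAt (G^[n]) p / ‖fderiv ℝ (G^[n]) p v‖ ^ (s + 1) ∧
      jacAt (G^[n]) p / ‖fderiv ℝ (G^[n]) p v‖ ^ (s + 1) ≤
        L * lam ^ (-(1 + ε) * (n : ℝ))

/-- `F` is `η`-homogeneous on `Λ` with rate `lam`. -/
def Homog (F : E2 → E2) (Λ : Set E2) (lam η : ℝ) : Prop :=
  ∀ p ∈ Λ,
    (∀ v : E2, ‖v‖ = 1 →
      lam ^ (1 + η) < ‖fderiv ℝ F p v‖ ∧ ‖fderiv ℝ F p v‖ < lam ^ (-η)) ∧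
    lam ^ (1 + η) < jacAt F p ∧ jacAt F p < lam ^ (1 - η)

/-- Simplified (homogeneous) forward `(L, δ)_v`-regularity:
`‖D_pFⁿ|_E‖ ≤ L λ^((1-δ)n)` for `1 ≤ n ≤ N`. -/
def SFwdV (F : E2 → E2) (p : E2) (lam L δ : ℝ) (N : ℕ∞) (v : E2) : Prop :=
  ∀ n : ℕ, 1 ≤ n → (n : ℕ∞) ≤ N →
    ‖fderiv ℝ (F^[n]) p v‖ ≤ L * lam ^ ((1 - δ) * (n : ℝ))

/-- Simplified (homogeneous) backward `(L, δ)_v`-regularity: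
`‖D_pF^(-n)|_E‖ ≥ L⁻¹ λ^(-(1-δ)n)` for `1 ≤ n ≤ M`. -/
def SBwdV (G : E2 → E2) (p : E2) (lam L δ : ℝ) (M : ℕ∞) (v : E2) : Prop :=
  ∀ n : ℕ, 1 ≤ n → (n : ℕ∞) ≤ M →
    L⁻¹ * lam ^ (-(1 - δ) * (n : ℝ)) ≤ ‖fderiv ℝ (G^[n]) p v‖

/-- Simplified (homogeneous) forward `(L, δ)_h`-regularity:
`‖D_pFⁿ|_E‖ ≥ L⁻¹ λ^(δn)` for `1 ≤ n ≤ N`. -/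
def SFwdH (F : E2 → E2) (p : E2) (lam L δ : ℝ) (N : ℕ∞) (v : E2) : Prop :=
  ∀ n : ℕ, 1 ≤ n → (n : ℕ∞) ≤ N →
    L⁻¹ * lam ^ (δ * (n : ℝ)) ≤ ‖fderiv ℝ (F^[n]) p v‖

/-- Simplified (homogeneous) backward `(L, δ)_h`-regularity:
`‖D_pF^(-n)|_E‖ ≤ L λ^(-δn)` for `1 ≤ n ≤ M`. -/
def SBwdH (G : E2 → E2) (p : E2) (lam L δ : ℝ) (M : ℕ∞) (v : E2) : Prop :=
  ∀ n : ℕ, 1 ≤ n → (n : ℕ∞) ≤ M →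
    ‖fderiv ℝ (G^[n]) p v‖ ≤ L * lam ^ (-δ * (n : ℝ))

/-!
Take `C = D = 2` and `β = 1`, so that `δ' = δ / 2`. Above the threshold,
`n δ (-log λ) > log 2 + 2 log L`, hence `L ≤ λ^(-δn/2)`: the slack that `pₙ` gains by being
`δ/2`-regular for `n` steps absorbs the constant `L` of `p₀`. For `m > n` the chain rule and
`D F⁻ⁿ ∘ D Fⁿ = id` split the growth of `F⁻ᵐ` at `pₙ` along `E_{pₙ}` into the growth of `F⁻ⁿ`
back to `p₀` times the growth of `F^{-(m-n)}` at `p₀` along `E`, and the two bounds multiply to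
the `δ`-bound; for `m ≤ n`, and in the other time direction, `δ/2`-regularity is already
stronger than `δ`-regularity. The point `p₋ₙ` is symmetric, the identity
`D Fⁿ ∘ D F⁻ⁿ = id` there coming from finite dimensionality.
-/

open Topology

theorem Set.LeftInvOn.iterate {α : Type*} {f g : α → α} {s : Set α} (hgf : LeftInvOn g f s)
    (hf : MapsTo f s s) (n : ℕ) : LeftInvOn g^[n] f^[n] s := by
  induction n with
  | zero => exact fun x _ => rfl
  | succ n ih =>
    intro x hx
    rw [iterate_succ_apply' f, iterate_succ_apply g, hgf (hf.iterate n hx), ih hx]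

section IterateFDeriv

variable {𝕜 E : Type*} [NontriviallyNormedField 𝕜] [NormedAddCommGroup E] [NormedSpace 𝕜 E]
  {f g : E → E} {s : Set E}

theorem differentiableAt_iterate_of_mapsTo (hf : MapsTo f s s)
    (hd : ∀ x ∈ s, DifferentiableAt 𝕜 f x) (n : ℕ) {x : E} (hx : x ∈ s) :
    DifferentiableAt 𝕜 f^[n] x := by
  induction n generalizing x with
  | zero => exact differentiableAt_id
  | succ n ih => rw [iterate_succ]; exact (ih (hf hx)).comp x (hd x hx)

theorem fderiv_iterate_add_apply (hf : MapsTo f s s) (hd : ∀ x ∈ s, DifferentiableAt 𝕜 f x)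
    (a b : ℕ) {x : E} (hx : x ∈ s) (w : E) :
    fderiv 𝕜 f^[b + a] x w = fderiv 𝕜 f^[b] (f^[a] x) (fderiv 𝕜 f^[a] x w) := by
  rw [iterate_add, fderiv_comp x (differentiableAt_iterate_of_mapsTo hf hd b (hf.iterate a hx))
    (differentiableAt_iterate_of_mapsTo hf hd a hx)]
  rfl

theorem fderiv_apply_fderiv_of_eventuallyEq_id {x : E} (hg : DifferentiableAt 𝕜 g (f x))
    (hf : DifferentiableAt 𝕜 f x) (hgf : g ∘ f =ᶠ[𝓝 x] id) (w : E) :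
    fderiv 𝕜 g (f x) (fderiv 𝕜 f x w) = w := by
  have h := hgf.fderiv_eq (𝕜 := 𝕜)
  rw [fderiv_comp x hg hf, fderiv_id] at h
  exact congr($h w)

theorem ContinuousLinearMap.rightInverse_of_leftInverse [FiniteDimensional 𝕜 E]
    {A B : E →L[𝕜] E} (h : LeftInverse B A) : RightInverse B A :=
  LinearMap.ext_iff.1 <| (LinearMap.comp_eq_id_comm 𝕜 E).1 (LinearMap.ext h)

end IterateFDeriv

theorem image_mem_nhds_of_det_fderiv_ne_zero {E : Type*} [NormedAddCommGroup E]
    [NormedSpace ℝ E] [FiniteDimensional ℝ E] {F : E → E} {Ω : Set E} {r : WithTop ℕ∞}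
    (hr : r ≠ 0) (hΩ : IsOpen Ω) (hF : ContDiffOn ℝ r F Ω) {x : E} (hx : x ∈ Ω)
    (hdet : (fderiv ℝ F x).det ≠ 0) : F '' Ω ∈ 𝓝 (F x) := by
  have hA : HasStrictFDerivAt F
      ((fderiv ℝ F x).toContinuousLinearEquivOfDetNeZero hdet : E →L[ℝ] E) x := by
    rw [ContinuousLinearMap.coe_toContinuousLinearEquivOfDetNeZero]
    exact (hF.contDiffAt (hΩ.mem_nhds hx)).hasStrictFDerivAt hr
  rw [← hA.map_nhds_eq_of_equiv]
  exact image_mem_map (hΩ.mem_nhds hx)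

theorem norm_apply_apply_pushDir {A B K : E2 →L[ℝ] E2} {v : E2} (hv : ‖v‖ = 1)
    (hBA : B (A v) = v) : ‖K (B (pushDir A v))‖ = ‖B (pushDir A v)‖ * ‖K v‖ := by
  have hB : B (pushDir A v) = ‖A v‖⁻¹ • v := by rw [pushDir, map_smul, hBA]
  rw [hB, map_smul, norm_smul, norm_smul, hv, mul_one]

theorem norm_fderiv_iterate_add_pushDir {f g : E2 → E2} {s : Set E2} (hg : MapsTo g s s)
    (hgd : ∀ x ∈ s, DifferentiableAt ℝ g x) {p v : E2} (hv : ‖v‖ = 1) {n : ℕ}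
    (hq : f^[n] p ∈ s) (hret : g^[n] (f^[n] p) = p)
    (hinv : fderiv ℝ g^[n] (f^[n] p) (fderiv ℝ f^[n] p v) = v) (k : ℕ) :
    ‖fderiv ℝ g^[k + n] (f^[n] p) (pushDir (fderiv ℝ f^[n] p) v)‖ =
      ‖fderiv ℝ g^[n] (f^[n] p) (pushDir (fderiv ℝ f^[n] p) v)‖ * ‖fderiv ℝ g^[k] p v‖ := by
  rw [fderiv_iterate_add_apply hg hgd n k hq, hret]
  exact norm_apply_apply_pushDir hv hinv

theorem differentiableAt_of_contDiffOn_image {r : ℕ} (hr : 1 ≤ r) {Ω Λ : Set E2}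
    {F G : E2 → E2} (hΩ : IsOpen Ω) (hF : ContDiffOn ℝ r F Ω) (hjac : ∀ x ∈ Ω, 0 < jacAt F x)
    (hG : ContDiffOn ℝ r G (F '' Ω)) (hΛΩ : Λ ⊆ Ω) (hFΛ : F '' Λ = Λ) {x : E2} (hx : x ∈ Λ) :
    DifferentiableAt ℝ G x := by
  obtain ⟨y, hy, rfl⟩ := hFΛ.symm ▸ hx
  have hr' : (r : WithTop ℕ∞) ≠ 0 := by exact_mod_cast (by omega : r ≠ 0)
  exact (hG.contDiffAt (image_mem_nhds_of_det_fderiv_ne_zero hr' hΩ hF (hΛΩ hy)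
    (hjac y (hΛΩ hy)).ne')).differentiableAt hr'

theorem norm_fderiv_iterate_add_pushDir_of_inverse {r : ℕ} (hr : 1 ≤ r) {Ω Λ : Set E2}
    {F G : E2 → E2} (hΩ : IsOpen Ω) (hF : ContDiffOn ℝ r F Ω) (hFΩ : MapsTo F Ω Ω)
    (hjac : ∀ x ∈ Ω, 0 < jacAt F x) (hG : ContDiffOn ℝ r G (F '' Ω)) (hGF : LeftInvOn G F Ω)
    (hGΛ : MapsTo G Λ Λ) (hΛΩ : Λ ⊆ Ω) (hFΛ : F '' Λ = Λ) {p v : E2} (hp : p ∈ Λ)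
    (hv : ‖v‖ = 1) (n k : ℕ) :
    ‖fderiv ℝ G^[k + n] (F^[n] p) (pushDir (fderiv ℝ F^[n] p) v)‖ =
        ‖fderiv ℝ G^[n] (F^[n] p) (pushDir (fderiv ℝ F^[n] p) v)‖ * ‖fderiv ℝ G^[k] p v‖ ∧
      ‖fderiv ℝ F^[k + n] (G^[n] p) (pushDir (fderiv ℝ G^[n] p) v)‖ =
        ‖fderiv ℝ F^[n] (G^[n] p) (pushDir (fderiv ℝ G^[n] p) v)‖ * ‖fderiv ℝ F^[k] p v‖ := by
  have hr' : (r : WithTop ℕ∞) ≠ 0 := by exact_mod_cast (by omega : r ≠ 0)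
  have hFΛ' : MapsTo F Λ Λ := (mapsTo_image F Λ).mono_right hFΛ.subset
  have hFd : ∀ x ∈ Λ, DifferentiableAt ℝ F x := fun x hx =>
    (hF.contDiffAt (hΩ.mem_nhds (hΛΩ hx))).differentiableAt hr'
  have hGd : ∀ x ∈ Λ, DifferentiableAt ℝ G x := fun x hx =>
    differentiableAt_of_contDiffOn_image hr hΩ hF hjac hG hΛΩ hFΛ hx
  have hFG : LeftInvOn F G Λ := by
    intro x hx
    obtain ⟨y, hy, rfl⟩ := hFΛ.symm ▸ hx
    rw [hGF (hΛΩ hy)]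
  have hinv : ∀ x ∈ Λ, ∀ w, fderiv ℝ G^[n] (F^[n] x) (fderiv ℝ F^[n] x w) = w :=
    fun x hx => fderiv_apply_fderiv_of_eventuallyEq_id
      (differentiableAt_iterate_of_mapsTo hGΛ hGd n (hFΛ'.iterate n hx))
      (differentiableAt_iterate_of_mapsTo hFΛ' hFd n hx)
      (eventually_of_mem (hΩ.mem_nhds (hΛΩ hx)) (hGF.iterate hFΩ n))
  have hq : G^[n] p ∈ Λ := hGΛ.iterate n hp
  have hret : F^[n] (G^[n] p) = p := hFG.iterate hGΛ n hp
  refine ⟨norm_fderiv_iterate_add_pushDir hGΛ hGd hv (hFΛ'.iterate n hp)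
    (hGF.iterate hFΩ n (hΛΩ hp)) (hinv p hp v) k,
    norm_fderiv_iterate_add_pushDir hFΛ' hFd hv hq hret ?_ k⟩
  refine ContinuousLinearMap.rightInverse_of_leftInverse (fun w => ?_) v
  simpa only [hret] using hinv _ hq w

theorem le_rpow_of_threshold_lt {lam δ L x : ℝ} (hlam0 : 0 < lam) (hlam1 : lam < 1)
    (hδ : 0 < δ) (hL : 0 < L) (hx : -(log (2 * L ^ (2 : ℝ)) / log lam) / δ < x) :
    L ≤ lam ^ (-(δ / 2) * x) := by
  rw [le_rpow_iff_log_le hL hlam0]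
  rw [div_lt_iff₀ hδ, ← div_neg, div_lt_iff₀ (neg_pos.2 (log_neg hlam0 hlam1)),
    log_mul two_ne_zero (by positivity), log_rpow hL] at hx
  nlinarith [log_pos one_lt_two]

theorem one_le_of_threshold_lt {lam δ L : ℝ} {n : ℕ} (hlam0 : 0 < lam) (hlam1 : lam < 1)
    (hδ : 0 < δ) (hL : 1 ≤ L) (hn : -(log (2 * L ^ (2 : ℝ)) / log lam) / δ < n) : 1 ≤ n := by
  have hlogL : 0 < log (2 * L ^ (2 : ℝ)) :=
    log_pos (by nlinarith [one_le_rpow hL (by norm_num : (0 : ℝ) ≤ 2)])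
  have hpos : 0 < -(log (2 * L ^ (2 : ℝ)) / log lam) / δ :=
    div_pos (neg_pos.2 (div_neg_of_pos_of_neg hlogL (log_neg hlam0 hlam1))) hδ
  exact_mod_cast hpos.trans hn

theorem rpow_mul_natCast_le_of_le {lam a a' : ℝ} (hlam0 : 0 < lam) (hlam1 : lam ≤ 1)
    (h : a ≤ a') (m : ℕ) : lam ^ (a' * m) ≤ lam ^ (a * m) :=
  rpow_le_rpow_of_exponent_ge hlam0 hlam1 (mul_le_mul_of_nonneg_right h m.cast_nonneg)

theorem apply_le_rpow_of_cocycle {lam a a' b L : ℝ} {u w : ℕ → ℝ} {n : ℕ} (hlam0 : 0 < lam)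
    (hlam1 : lam ≤ 1) (hn : 1 ≤ n) (hu : ∀ m : ℕ, 1 ≤ m → m ≤ n → u m ≤ lam ^ (a' * m))
    (hw : ∀ k : ℕ, 1 ≤ k → w k ≤ L * lam ^ (b * k)) (hw0 : ∀ k, 0 ≤ w k) (ha : a ≤ a')
    (hb : a ≤ b) (hL : L ≤ lam ^ ((a - a') * n)) (hmul : ∀ k, u (k + n) = u n * w k) {m : ℕ}
    (hm : 1 ≤ m) : u m ≤ lam ^ (a * m) := by
  rcases le_or_gt m n with hmn | hmn
  · exact (hu m hm hmn).trans (rpow_mul_natCast_le_of_le hlam0 hlam1 ha m)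
  obtain ⟨k, hk, rfl⟩ : ∃ k, 1 ≤ k ∧ m = k + n := ⟨m - n, by omega, by omega⟩
  calc u (k + n) = u n * w k := hmul k
    _ ≤ lam ^ (a' * n) * (L * lam ^ (b * k)) :=
        mul_le_mul (hu n hn le_rfl) (hw k hk) (hw0 k) (by positivity)
    _ ≤ lam ^ (a' * n) * (lam ^ ((a - a') * n) * lam ^ (b * k)) := by gcongr
    _ = lam ^ (a * n + b * k) := by rw [← rpow_add hlam0, ← rpow_add hlam0]; ring_nf
    _ ≤ lam ^ (a * ↑(k + n)) := by
        refine rpow_le_rpow_of_exponent_ge hlam0 hlam1 ?_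
        push_cast
        nlinarith [(k.cast_nonneg : (0 : ℝ) ≤ k)]

theorem rpow_le_apply_of_cocycle {lam a a' b L : ℝ} {u w : ℕ → ℝ} {n : ℕ} (hlam0 : 0 < lam)
    (hlam1 : lam ≤ 1) (hn : 1 ≤ n) (hu : ∀ m : ℕ, 1 ≤ m → m ≤ n → lam ^ (a' * m) ≤ u m)
    (hw : ∀ k : ℕ, 1 ≤ k → L⁻¹ * lam ^ (b * k) ≤ w k) (hL0 : 0 < L) (ha : a' ≤ a)
    (hb : b ≤ a) (hL : L ≤ lam ^ ((a' - a) * n)) (hmul : ∀ k, u (k + n) = u n * w k) {m : ℕ}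
    (hm : 1 ≤ m) : lam ^ (a * m) ≤ u m := by
  rcases le_or_gt m n with hmn | hmn
  · exact (rpow_mul_natCast_le_of_le hlam0 hlam1 ha m).trans (hu m hm hmn)
  obtain ⟨k, hk, rfl⟩ : ∃ k, 1 ≤ k ∧ m = k + n := ⟨m - n, by omega, by omega⟩
  have hLinv : lam ^ ((a - a') * n) ≤ L⁻¹ := by
    rw [show (a - a') * (n : ℝ) = -((a' - a) * n) by ring, rpow_neg hlam0.le]
    exact inv_anti₀ hL0 hL
  have hun : lam ^ (a' * n) ≤ u n := hu n hn le_rfl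
  calc lam ^ (a * ↑(k + n)) ≤ lam ^ (a * n + b * k) := by
        refine rpow_le_rpow_of_exponent_ge hlam0 hlam1 ?_
        push_cast
        nlinarith [(k.cast_nonneg : (0 : ℝ) ≤ k)]
    _ = lam ^ (a' * n) * (lam ^ ((a - a') * n) * lam ^ (b * k)) := by
        rw [← rpow_add hlam0, ← rpow_add hlam0]; ring_nf
    _ ≤ lam ^ (a' * n) * (L⁻¹ * lam ^ (b * k)) := by gcongr
    _ ≤ u n * w k :=
        mul_le_mul hun (hw k hk) (by positivity) ((rpow_pos_of_pos hlam0 _).le.trans hun)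
    _ = u (k + n) := (hmul k).symm

section Regularity

variable {F G : E2 → E2} {p q v w : E2} {lam L ε δ δ' : ℝ} {N : ℕ∞}

theorem SFwdV.mono (hlam0 : 0 < lam) (hlam1 : lam ≤ 1) (hL : 0 ≤ L) (hδ : δ' ≤ δ)
    (h : SFwdV F p lam L δ' N v) : SFwdV F p lam L δ N v := fun m hm hmN =>
  (h m hm hmN).trans <| mul_le_mul_of_nonneg_left
    (rpow_mul_natCast_le_of_le hlam0 hlam1 (by linarith) m) hL

theorem SBwdV.mono (hlam0 : 0 < lam) (hlam1 : lam ≤ 1) (hL : 0 ≤ L) (hδ : δ' ≤ δ)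
    (h : SBwdV G p lam L δ' N v) : SBwdV G p lam L δ N v := fun m hm hmN =>
  (mul_le_mul_of_nonneg_left (rpow_mul_natCast_le_of_le hlam0 hlam1 (by linarith) m)
    (inv_nonneg.2 hL)).trans (h m hm hmN)

theorem SFwdH.mono (hlam0 : 0 < lam) (hlam1 : lam ≤ 1) (hL : 0 ≤ L) (hδ : δ' ≤ δ)
    (h : SFwdH F p lam L δ' N v) : SFwdH F p lam L δ N v := fun m hm hmN =>
  (mul_le_mul_of_nonneg_left (rpow_mul_natCast_le_of_le hlam0 hlam1 hδ m)
    (inv_nonneg.2 hL)).trans (h m hm hmN)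

theorem SBwdH.mono (hlam0 : 0 < lam) (hlam1 : lam ≤ 1) (hL : 0 ≤ L) (hδ : δ' ≤ δ)
    (h : SBwdH G p lam L δ' N v) : SBwdH G p lam L δ N v := fun m hm hmN =>
  (h m hm hmN).trans <| mul_le_mul_of_nonneg_left
    (rpow_mul_natCast_le_of_le hlam0 hlam1 (by linarith) m) hL

theorem SFwdV.of_cocycle (hlam0 : 0 < lam) (hlam1 : lam ≤ 1) (hεδ : ε ≤ δ) (hδ : 0 ≤ δ)
    {n : ℕ} (hn : 1 ≤ n) (hLn : L ≤ lam ^ (-(δ / 2) * n)) (hq : SFwdV F q lam 1 (δ / 2) n w)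
    (hp : SFwdV F p lam L ε ⊤ v)
    (hmul : ∀ k, ‖fderiv ℝ F^[k + n] q w‖ =
      ‖fderiv ℝ F^[n] q w‖ * ‖fderiv ℝ F^[k] p v‖) :
    SFwdV F q lam 1 δ ⊤ w := fun m hm _ => by
  rw [one_mul]
  exact apply_le_rpow_of_cocycle hlam0 hlam1 hn
    (fun m hm hmn => (hq m hm (by exact_mod_cast hmn)).trans_eq (one_mul _))
    (fun k hk => hp k hk le_top) (fun _ => norm_nonneg _) (by linarith) (by linarith)
    (by convert hLn using 2; ring) hmul hm

theorem SBwdV.of_cocycle (hlam0 : 0 < lam) (hlam1 : lam ≤ 1) (hL : 0 < L) (hεδ : ε ≤ δ)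
    (hδ : 0 ≤ δ) {n : ℕ} (hn : 1 ≤ n) (hLn : L ≤ lam ^ (-(δ / 2) * n))
    (hq : SBwdV G q lam 1 (δ / 2) n w) (hp : SBwdV G p lam L ε ⊤ v)
    (hmul : ∀ k, ‖fderiv ℝ G^[k + n] q w‖ =
      ‖fderiv ℝ G^[n] q w‖ * ‖fderiv ℝ G^[k] p v‖) :
    SBwdV G q lam 1 δ ⊤ w := fun m hm _ => by
  rw [inv_one, one_mul]
  exact rpow_le_apply_of_cocycle hlam0 hlam1 hn
    (fun m hm hmn => (hq m hm (by exact_mod_cast hmn)).trans_eq' (by rw [inv_one, one_mul]))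
    (fun k hk => hp k hk le_top) hL (by linarith) (by linarith)
    (by convert hLn using 2; ring) hmul hm

theorem SFwdH.of_cocycle (hlam0 : 0 < lam) (hlam1 : lam ≤ 1) (hL : 0 < L) (hεδ : ε ≤ δ)
    (hδ : 0 ≤ δ) {n : ℕ} (hn : 1 ≤ n) (hLn : L ≤ lam ^ (-(δ / 2) * n))
    (hq : SFwdH F q lam 1 (δ / 2) n w) (hp : SFwdH F p lam L ε ⊤ v)
    (hmul : ∀ k, ‖fderiv ℝ F^[k + n] q w‖ =
      ‖fderiv ℝ F^[n] q w‖ * ‖fderiv ℝ F^[k] p v‖) :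
    SFwdH F q lam 1 δ ⊤ w := fun m hm _ => by
  rw [inv_one, one_mul]
  exact rpow_le_apply_of_cocycle hlam0 hlam1 hn
    (fun m hm hmn => (hq m hm (by exact_mod_cast hmn)).trans_eq' (by rw [inv_one, one_mul]))
    (fun k hk => hp k hk le_top) hL (by linarith) (by linarith)
    (by convert hLn using 2; ring) hmul hm

theorem SBwdH.of_cocycle (hlam0 : 0 < lam) (hlam1 : lam ≤ 1) (hεδ : ε ≤ δ) (hδ : 0 ≤ δ)
    {n : ℕ} (hn : 1 ≤ n) (hLn : L ≤ lam ^ (-(δ / 2) * n)) (hq : SBwdH G q lam 1 (δ / 2) n w)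
    (hp : SBwdH G p lam L ε ⊤ v)
    (hmul : ∀ k, ‖fderiv ℝ G^[k + n] q w‖ =
      ‖fderiv ℝ G^[n] q w‖ * ‖fderiv ℝ G^[k] p v‖) :
    SBwdH G q lam 1 δ ⊤ w := fun m hm _ => by
  rw [one_mul]
  exact apply_le_rpow_of_cocycle hlam0 hlam1 hn
    (fun m hm hmn => (hq m hm (by exact_mod_cast hmn)).trans_eq (one_mul _))
    (fun k hk => hp k hk le_top) (fun _ => norm_nonneg _) (by linarith) (by linarith)
    (by convert hLn using 2; ring) hmul hm

end Regularity

/-- **Conditional Pliss moments along a Pesin-regular orbit.**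
There are constants `C ≥ 1`, `D ≥ 1`, `β ≥ 1`, depending only on `r`, such that the
following holds. Assume `F` is `η`-homogeneous on `Λ` with rate `λ`, `C·η^β < ε < δ`,
`C·δ^(1/β) < 1`, and set `δ' := δ^β/C`. Let `p₀ ∈ Λ` be Pesin `(L,ε)_v`-regular along a
direction `E`, and let `n > -δ⁻¹·log_λ(C·L^D)`. If `p_n := Fⁿ(p₀)` is `(n,∞)`-times
`(1,δ')_v`-regular along `E_{p_n} := DFⁿ(E)`, then `p_n` is Pesin `(1,δ)_v`-regular along
`E_{p_n}`; similarly, if `p_{-n} := F⁻ⁿ(p₀)` is `(∞,n)`-times `(1,δ')_v`-regular along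
`E_{p_{-n}} := DF⁻ⁿ(E)`, then `p_{-n}` is Pesin `(1,δ)_v`-regular along `E_{p_{-n}}`.
The same statement holds with `h`-regularity in place of `v`-regularity throughout. -/
theorem conditional_pliss_full_orbit (r : ℕ) (hr : 2 ≤ r) :
    ∃ C D β : ℝ, 1 ≤ C ∧ 1 ≤ D ∧ 1 ≤ β ∧
      ∀ (Ω : Set E2) (F G : E2 → E2) (Λ : Set E2) (lam η ε δ L : ℝ) (p₀ v : E2),
        IsOpen Ω → ContDiffOn ℝ r F Ω → Set.InjOn F Ω → Set.MapsTo F Ω Ω →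
        (∀ x ∈ Ω, 0 < jacAt F x) →
        ContDiffOn ℝ r G (F '' Ω) → (∀ x ∈ Ω, G (F x) = x) → Set.MapsTo G Λ Λ →
        Λ ⊆ Ω → IsCompact Λ → F '' Λ = Λ →
        0 < lam → lam < 1 → 0 < η → Homog F Λ lam η →
        C * η ^ β < ε → ε < δ → C * δ ^ β⁻¹ < 1 → 1 ≤ L →
        p₀ ∈ Λ → ‖v‖ = 1 →
        ((SFwdV F p₀ lam L ε ⊤ v ∧ SBwdV G p₀ lam L ε ⊤ v) →
          ∀ n : ℕ, -(Real.log (C * L ^ D) / Real.log lam) / δ < (n : ℝ) →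
            ((SBwdV G (F^[n] p₀) lam 1 (δ ^ β / C) (n : ℕ∞)
                  (pushDir (fderiv ℝ (F^[n]) p₀) v) ∧
                SFwdV F (F^[n] p₀) lam 1 (δ ^ β / C) ⊤
                  (pushDir (fderiv ℝ (F^[n]) p₀) v) →
              SFwdV F (F^[n] p₀) lam 1 δ ⊤ (pushDir (fderiv ℝ (F^[n]) p₀) v) ∧
                SBwdV G (F^[n] p₀) lam 1 δ ⊤ (pushDir (fderiv ℝ (F^[n]) p₀) v)) ∧
             (SBwdV G (G^[n] p₀) lam 1 (δ ^ β / C) ⊤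
                  (pushDir (fderiv ℝ (G^[n]) p₀) v) ∧
                SFwdV F (G^[n] p₀) lam 1 (δ ^ β / C) (n : ℕ∞)
                  (pushDir (fderiv ℝ (G^[n]) p₀) v) →
              SFwdV F (G^[n] p₀) lam 1 δ ⊤ (pushDir (fderiv ℝ (G^[n]) p₀) v) ∧
                SBwdV G (G^[n] p₀) lam 1 δ ⊤ (pushDir (fderiv ℝ (G^[n]) p₀) v)))) ∧
        ((SFwdH F p₀ lam L ε ⊤ v ∧ SBwdH G p₀ lam L ε ⊤ v) →
          ∀ n : ℕ, -(Real.log (C * L ^ D) / Real.log lam) / δ < (n : ℝ) →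
            ((SBwdH G (F^[n] p₀) lam 1 (δ ^ β / C) (n : ℕ∞)
                  (pushDir (fderiv ℝ (F^[n]) p₀) v) ∧
                SFwdH F (F^[n] p₀) lam 1 (δ ^ β / C) ⊤
                  (pushDir (fderiv ℝ (F^[n]) p₀) v) →
              SFwdH F (F^[n] p₀) lam 1 δ ⊤ (pushDir (fderiv ℝ (F^[n]) p₀) v) ∧
                SBwdH G (F^[n] p₀) lam 1 δ ⊤ (pushDir (fderiv ℝ (F^[n]) p₀) v)) ∧
             (SBwdH G (G^[n] p₀) lam 1 (δ ^ β / C) ⊤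
                  (pushDir (fderiv ℝ (G^[n]) p₀) v) ∧
                SFwdH F (G^[n] p₀) lam 1 (δ ^ β / C) (n : ℕ∞)
                  (pushDir (fderiv ℝ (G^[n]) p₀) v) →
              SFwdH F (G^[n] p₀) lam 1 δ ⊤ (pushDir (fderiv ℝ (G^[n]) p₀) v) ∧
                SBwdH G (G^[n] p₀) lam 1 δ ⊤ (pushDir (fderiv ℝ (G^[n]) p₀) v)))) := by
  refine ⟨2, 2, 1, one_le_two, one_le_two, le_rfl, ?_⟩
  simp only [inv_one, rpow_one]
  intro Ω F G Λ lam η ε δ L p₀ v hΩ hF _ hFΩ hjac hG hGF hGΛ hΛΩ _ hFΛ hlam0 hlam1 hη _ hCη hεδ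
    _ hL hp₀ hv
  have hδ : 0 < δ := (lt_trans (by positivity) hCη).trans hεδ
  have hL0 : 0 < L := one_pos.trans_le hL
  have hsplit := norm_fderiv_iterate_add_pushDir_of_inverse (by omega) hΩ hF hFΩ hjac hG hGF hGΛ
    hΛΩ hFΛ hp₀ hv
  have hthr : ∀ n : ℕ, -(log (2 * L ^ (2 : ℝ)) / log lam) / δ < n →
      1 ≤ n ∧ L ≤ lam ^ (-(δ / 2) * n) := fun n hn =>
    ⟨one_le_of_threshold_lt hlam0 hlam1 hδ hL hn, le_rpow_of_threshold_lt hlam0 hlam1 hδ hL0 hn⟩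
  refine ⟨fun ⟨hFp, hBp⟩ n hn => ?_, fun ⟨hFp, hBp⟩ n hn => ?_⟩ <;>
    obtain ⟨hn1, hLn⟩ := hthr n hn
  · exact ⟨fun ⟨hBn, hFn⟩ => ⟨hFn.mono hlam0 hlam1.le zero_le_one (by linarith),
        hBn.of_cocycle hlam0 hlam1.le hL0 hεδ.le hδ.le hn1 hLn hBp fun k => (hsplit n k).1⟩,
      fun ⟨hBn, hFn⟩ => ⟨hFn.of_cocycle hlam0 hlam1.le hεδ.le hδ.le hn1 hLn hFp
        fun k => (hsplit n k).2, hBn.mono hlam0 hlam1.le zero_le_one (by linarith)⟩⟩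
  · exact ⟨fun ⟨hBn, hFn⟩ => ⟨hFn.mono hlam0 hlam1.le zero_le_one (by linarith),
        hBn.of_cocycle hlam0 hlam1.le hεδ.le hδ.le hn1 hLn hBp fun k => (hsplit n k).1⟩,
      fun ⟨hBn, hFn⟩ => ⟨hFn.of_cocycle hlam0 hlam1.le hL0 hεδ.le hδ.le hn1 hLn hFp
        fun k => (hsplit n k).2, hBn.mono hlam0 hlam1.le zero_le_one (by linarith)⟩⟩
end
end
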